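/- Let m ≥ 1 be an integer, let U ⊆ ℝ^{n+2} be open, and let l be a smooth function on U satisfying Xl = (−n/2 − m) l and Δ̃l = 0 on U. Then c_m Δ̃^{m−1}(Q^{m−1} l) = l on U, where the constant c_m is defined by c_m^{-1} = (−4)^{m−1}((m−1)!)². -/

import Mathlib

open Matrix

noncomputable section

abbrev Idx (p q : ℕ) : Type := Unit ⊕ (Fin (p + q)) ⊕ Unit

/-- The diagonal quadratic form of signature `(p,q)` on `ℝ^n`, `n = p + q`. -/
def hMat (p q : ℕ) : Matrix (Fin (p + q)) (Fin (p + q)) ℝ :=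
  Matrix.diagonal fun i => if (i : ℕ) < p then (1 : ℝ) else -1

/-- The quadratic form of signature `(p+1,q+1)` on `ℝ^{n+2}`, in block form
`[[0,0,1],[0,h,0],[1,0,0]]`. -/
def htMat (p q : ℕ) : Matrix (Idx p q) (Idx p q) ℝ :=
  Matrix.of fun I J =>
    match I, J with
    | Sum.inl _, Sum.inr (Sum.inr _) => (1 : ℝ)
    | Sum.inr (Sum.inr _), Sum.inl _ => 1
    | Sum.inr (Sum.inl i), Sum.inr (Sum.inl j) => hMat p q i j
    | _, _ => 0

/-- `Q(x) = Σ h̃_{IJ} x^I x^J`. -/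
def QForm (p q : ℕ) (x : Idx p q → ℝ) : ℝ := ∑ I, ∑ J, htMat p q I J * x I * x J

/-- The partial derivative `∂_I f`. -/
def pderiv (p q : ℕ) (I : Idx p q) (f : (Idx p q → ℝ) → ℝ) : (Idx p q → ℝ) → ℝ :=
  fun x => fderiv ℝ f x (Pi.single I 1)

/-- The ambient Laplacian `Δ̃f = Σ h̃^{IJ} ∂_I ∂_J f`. -/
def laplt (p q : ℕ) (f : (Idx p q → ℝ) → ℝ) : (Idx p q → ℝ) → ℝ :=
  fun x => ∑ I, ∑ J, (htMat p q)⁻¹ I J * pderiv p q I (pderiv p q J f) x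

/-- The Euler operator `Xf = Σ x^I ∂_I f`. -/
def euler (p q : ℕ) (f : (Idx p q → ℝ) → ℝ) : (Idx p q → ℝ) → ℝ :=
  fun x => ∑ I, x I * pderiv p q I f x

/-- The null cone `N = {x ≠ 0 : Q(x) = 0}` of `h̃`. -/
def nullCone (p q : ℕ) : Set (Idx p q → ℝ) := {x | x ≠ 0 ∧ QForm p q x = 0}

/-- A function vanishes to infinite order at `y` if its value and all iterated
derivatives of every order vanish at `y`. -/
def VanishesToInfOrderAt (p q : ℕ) (f : (Idx p q → ℝ) → ℝ) (y : Idx p q → ℝ) : Prop :=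
  ∀ k : ℕ, iteratedFDeriv ℝ k f y = 0

/-- An open cone in `ℝ^{n+2} ∖ {0}`. -/
def IsOpenCone (p q : ℕ) (U : Set (Idx p q → ℝ)) : Prop :=
  IsOpen U ∧ (∀ x ∈ U, x ≠ 0) ∧ ∀ x ∈ U, ∀ l : ℝ, 0 < l → l • x ∈ U

/-- The constant `c_m` with `c_m⁻¹ = (-4)^{m-1} ((m-1)!)²`. -/
def cConst (m : ℕ) : ℝ := ((-4 : ℝ) ^ (m - 1) * ((m - 1).factorial : ℝ) ^ 2)⁻¹

variable {p q : ℕ}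

lemma hMat_symm (i j : Fin (p+q)) : hMat p q i j = hMat p q j i := by
  rcases eq_or_ne i j with h | h
  · subst h; rfl
  · simp [hMat, Matrix.diagonal_apply, h, h.symm]

lemma htMat_symm (I J : Idx p q) : htMat p q I J = htMat p q J I := by
  rcases I with _ | i | _ <;> rcases J with _ | j | _ <;> simp [htMat, hMat_symm]

-- derivative of Q
lemma hasFDerivAt_QForm (x : Idx p q → ℝ) :
    HasFDerivAt (QForm p q)
      (∑ I, ∑ J, htMat p q I J •
        ((x I) • (ContinuousLinearMap.proj J : (Idx p q → ℝ) →L[ℝ] ℝ) + (x J) • (ContinuousLinearMap.proj I : (Idx p q → ℝ) →L[ℝ] ℝ))) x := by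
  have : QForm p q = fun y => ∑ I, ∑ J, htMat p q I J * (y I * y J) := by
    funext y; unfold QForm; congr 1; funext I; congr 1; funext J; ring
  rw [this]
  apply HasFDerivAt.fun_sum; intro I _
  apply HasFDerivAt.fun_sum; intro J _
  have hI : HasFDerivAt (fun y : Idx p q → ℝ => y I) (ContinuousLinearMap.proj I : (Idx p q → ℝ) →L[ℝ] ℝ) x :=
    hasFDerivAt_apply I x
  have hJ : HasFDerivAt (fun y : Idx p q → ℝ => y J) (ContinuousLinearMap.proj J : (Idx p q → ℝ) →L[ℝ] ℝ) x :=
    hasFDerivAt_apply J x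
  exact (hI.mul hJ).const_mul _

lemma contDiff_QForm : ContDiff ℝ (⊤ : ℕ∞) (QForm p q) := by
  unfold QForm
  apply ContDiff.sum; intro I _
  apply ContDiff.sum; intro J _
  exact (contDiff_const.mul (contDiff_apply ℝ ℝ I)).mul (contDiff_apply ℝ ℝ J)

lemma pderiv_QForm (A : Idx p q) (x : Idx p q → ℝ) :
    pderiv p q A (QForm p q) x = 2 * ∑ J, htMat p q A J * x J := by
  have h := (hasFDerivAt_QForm x).fderiv
  unfold pderiv
  rw [h]
  simp only [ContinuousLinearMap.sum_apply, ContinuousLinearMap.smul_apply,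
    ContinuousLinearMap.add_apply, ContinuousLinearMap.proj_apply, Pi.single_apply,
    smul_eq_mul]
  have step : ∀ I : Idx p q, (∑ J : Idx p q, htMat p q I J *
      ((x I * if J = A then (1:ℝ) else 0) + x J * if I = A then (1:ℝ) else 0))
      = htMat p q I A * x I + (if I = A then ∑ J : Idx p q, htMat p q I J * x J else 0) := by
    intro I
    simp only [mul_add, Finset.sum_add_distrib]
    congr 1
    · simp [mul_ite, Finset.sum_ite_eq']
    · split_ifs with h
      · simp
      · simp
  rw [Finset.sum_congr rfl (fun I _ => step I), Finset.sum_add_distrib]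
  simp only [Finset.sum_ite_eq', Finset.mem_univ, if_true]
  have : ∀ I : Idx p q, htMat p q I A * x I = htMat p q A I * x I := fun I => by
    rw [htMat_symm]
  rw [Finset.sum_congr rfl (fun I _ => this I)]
  ring

lemma pderiv_QForm_eq (A : Idx p q) :
    pderiv p q A (QForm p q) = fun y => ∑ J, (2 * htMat p q A J) * y J := by
  funext y
  rw [pderiv_QForm, Finset.mul_sum]
  exact Finset.sum_congr rfl fun J _ => by ring

lemma hasFDerivAt_pderivQ (A : Idx p q) (x : Idx p q → ℝ) :
    HasFDerivAt (pderiv p q A (QForm p q))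
      (∑ J, (2 * htMat p q A J) • (ContinuousLinearMap.proj J : (Idx p q → ℝ) →L[ℝ] ℝ)) x := by
  rw [pderiv_QForm_eq]
  exact HasFDerivAt.fun_sum fun J _ => (hasFDerivAt_apply J x).const_mul _

lemma differentiable_pderivQ (A : Idx p q) : Differentiable ℝ (pderiv p q A (QForm p q)) :=
  fun x => (hasFDerivAt_pderivQ A x).differentiableAt

lemma pderiv_pderiv_QForm (A B : Idx p q) (x : Idx p q → ℝ) :
    pderiv p q B (pderiv p q A (QForm p q)) x = 2 * htMat p q A B := by
  show fderiv ℝ (pderiv p q A (QForm p q)) x (Pi.single B 1) = 2 * htMat p q A B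
  rw [(hasFDerivAt_pderivQ A x).fderiv]
  simp only [ContinuousLinearMap.sum_apply, ContinuousLinearMap.smul_apply,
    ContinuousLinearMap.proj_apply, Pi.single_apply, smul_eq_mul, mul_ite, mul_one, mul_zero,
    Finset.sum_ite_eq', Finset.mem_univ, if_true]

lemma pderiv_congr_nhds {f g : (Idx p q → ℝ) → ℝ} {x : Idx p q → ℝ}
    (h : f =ᶠ[nhds x] g) (I : Idx p q) : pderiv p q I f x = pderiv p q I g x := by
  unfold pderiv; rw [h.fderiv_eq]

lemma pderiv_congr_open {U : Set (Idx p q → ℝ)} (hU : IsOpen U)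
    {f g : (Idx p q → ℝ) → ℝ} (h : ∀ y ∈ U, f y = g y) {x : Idx p q → ℝ} (hx : x ∈ U)
    (I : Idx p q) : pderiv p q I f x = pderiv p q I g x :=
  pderiv_congr_nhds (Filter.eventuallyEq_of_mem (hU.mem_nhds hx) h) I

lemma laplt_congr_open {U : Set (Idx p q → ℝ)} (hU : IsOpen U)
    {f g : (Idx p q → ℝ) → ℝ} (h : ∀ y ∈ U, f y = g y) {x : Idx p q → ℝ} (hx : x ∈ U) :
    laplt p q f x = laplt p q g x := by
  unfold laplt
  refine Finset.sum_congr rfl fun I _ => Finset.sum_congr rfl fun J _ => ?_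
  congr 1
  exact pderiv_congr_open hU (fun y hy => pderiv_congr_open hU h hy J) hx I

lemma fderiv_const_mul' (c : ℝ) (g : (Idx p q → ℝ) → ℝ) (x : Idx p q → ℝ) :
    fderiv ℝ (fun y => c * g y) x = c • fderiv ℝ g x := by
  by_cases hg : DifferentiableAt ℝ g x
  · exact fderiv_const_mul hg c
  · rcases eq_or_ne c 0 with rfl | hc
    · simp
    · have hcg : ¬ DifferentiableAt ℝ (fun y => c * g y) x := by
        intro h
        have := h.const_mul c⁻¹
        simp only [← mul_assoc, inv_mul_cancel₀ hc, one_mul] at this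
        exact hg this
      rw [fderiv_zero_of_not_differentiableAt hcg, fderiv_zero_of_not_differentiableAt hg,
        smul_zero]

lemma pderiv_const_mul (c : ℝ) (g : (Idx p q → ℝ) → ℝ) (x : Idx p q → ℝ) (I : Idx p q) :
    pderiv p q I (fun y => c * g y) x = c * pderiv p q I g x := by
  unfold pderiv; rw [fderiv_const_mul' c g x]; rfl

lemma laplt_const_mul (c : ℝ) (g : (Idx p q → ℝ) → ℝ) (x : Idx p q → ℝ) :
    laplt p q (fun y => c * g y) x = c * laplt p q g x := by
  unfold laplt
  rw [Finset.mul_sum]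
  refine Finset.sum_congr rfl fun I _ => ?_
  rw [Finset.mul_sum]
  refine Finset.sum_congr rfl fun J _ => ?_
  have h1 : pderiv p q J (fun y => c * g y) = fun y => c * pderiv p q J g y := by
    funext y; exact pderiv_const_mul c g y J
  rw [h1, pderiv_const_mul]
  ring

lemma pderiv_mul {f g : (Idx p q → ℝ) → ℝ} {x : Idx p q → ℝ}
    (hf : DifferentiableAt ℝ f x) (hg : DifferentiableAt ℝ g x) (I : Idx p q) :
    pderiv p q I (fun y => f y * g y) x = pderiv p q I f x * g x + f x * pderiv p q I g x := by
  unfold pderiv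
  rw [fderiv_fun_mul hf hg]
  simp [smul_eq_mul]
  ring

lemma pderiv_add {f g : (Idx p q → ℝ) → ℝ} {x : Idx p q → ℝ}
    (hf : DifferentiableAt ℝ f x) (hg : DifferentiableAt ℝ g x) (I : Idx p q) :
    pderiv p q I (fun y => f y + g y) x = pderiv p q I f x + pderiv p q I g x := by
  unfold pderiv
  rw [fderiv_fun_add hf hg]
  rfl

lemma contDiffOn_pderiv {U : Set (Idx p q → ℝ)} (hU : IsOpen U)
    {f : (Idx p q → ℝ) → ℝ} (hf : ContDiffOn ℝ (⊤ : ℕ∞) f U) (I : Idx p q) :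
    ContDiffOn ℝ (⊤ : ℕ∞) (pderiv p q I f) U := by
  have h1 : ContDiffOn ℝ (⊤ : ℕ∞) (fderivWithin ℝ f U) U :=
    hf.fderivWithin hU.uniqueDiffOn (by simp)
  have h2 : ContDiffOn ℝ (⊤ : ℕ∞) (fun x => fderivWithin ℝ f U x (Pi.single I 1)) U :=
    h1.clm_apply contDiffOn_const
  exact h2.congr fun x hx => by
    show pderiv p q I f x = _
    unfold pderiv
    rw [fderivWithin_of_isOpen hU hx]

lemma differentiableAt_of_contDiffOn {U : Set (Idx p q → ℝ)} (hU : IsOpen U)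
    {f : (Idx p q → ℝ) → ℝ} (hf : ContDiffOn ℝ (⊤ : ℕ∞) f U) {x : Idx p q → ℝ} (hx : x ∈ U) :
    DifferentiableAt ℝ f x :=
  ((hf.contDiffAt (hU.mem_nhds hx)).differentiableAt (by simp))

lemma hMat_mul_self (p q : ℕ) : hMat p q * hMat p q = 1 := by
  rw [hMat, Matrix.diagonal_mul_diagonal]
  have : (fun i : Fin (p+q) => (if (i:ℕ) < p then (1:ℝ) else -1) * if (i:ℕ) < p then (1:ℝ) else -1)
      = fun _ => (1:ℝ) := by
    funext i; split_ifs <;> norm_num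
  rw [this, Matrix.diagonal_one]

lemma htMat_mul_self (p q : ℕ) : htMat p q * htMat p q = 1 := by
  have h2 := hMat_mul_self p q
  ext I J
  rcases I with _ | i | _ <;> rcases J with _ | j | _ <;>
    simp [Matrix.mul_apply, htMat, Fintype.sum_sum_type, Matrix.one_apply]
  · have := congrFun (congrFun h2 i) j
    simpa [Matrix.mul_apply, Matrix.one_apply] using this

lemma htMat_inv (p q : ℕ) : (htMat p q)⁻¹ = htMat p q :=
  Matrix.inv_eq_right_inv (htMat_mul_self p q)

lemma sum_htMat_mul (I K : Idx p q) :
    ∑ J, htMat p q I J * htMat p q J K = if I = K then 1 else 0 := by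
  have := congrFun (congrFun (htMat_mul_self p q) I) K
  simpa [Matrix.mul_apply, Matrix.one_apply] using this

lemma sum_htMat_pderivQ (x : Idx p q → ℝ) (I : Idx p q) :
    ∑ J, htMat p q I J * pderiv p q J (QForm p q) x = 2 * x I := by
  simp only [pderiv_QForm]
  have step : ∀ J, htMat p q I J * (2 * ∑ K, htMat p q J K * x K)
      = ∑ K, 2 * (htMat p q I J * htMat p q J K) * x K := by
    intro J
    rw [Finset.mul_sum, Finset.mul_sum]
    exact Finset.sum_congr rfl fun K _ => by ring
  rw [Finset.sum_congr rfl fun J _ => step J, Finset.sum_comm]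
  have step2 : ∀ K, (∑ J, 2 * (htMat p q I J * htMat p q J K) * x K)
      = 2 * (if I = K then 1 else 0) * x K := by
    intro K
    rw [← Finset.sum_mul, ← Finset.mul_sum, sum_htMat_mul]
  rw [Finset.sum_congr rfl fun K _ => step2 K]
  simp [mul_ite, ite_mul, Finset.sum_ite_eq']

lemma card_Idx : (Finset.univ : Finset (Idx p q)).card = p + q + 2 := by
  simp [Finset.card_univ]
  omega

lemma laplt_QForm_mul {U : Set (Idx p q → ℝ)} (hU : IsOpen U)
    {g : (Idx p q → ℝ) → ℝ} (hg : ContDiffOn ℝ (⊤ : ℕ∞) g U) {x : Idx p q → ℝ} (hx : x ∈ U) :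
    laplt p q (fun y => QForm p q y * g y) x
      = QForm p q x * laplt p q g x + 4 * euler p q g x + 2 * (p + q + 2) * g x := by
  have hQd : ∀ y, DifferentiableAt ℝ (QForm p q) y :=
    fun y => (contDiff_QForm.differentiable (by simp)) y
  have hgd : ∀ y ∈ U, DifferentiableAt ℝ g y :=
    fun y hy => differentiableAt_of_contDiffOn hU hg hy
  have hdg : ∀ J y, y ∈ U → DifferentiableAt ℝ (pderiv p q J g) y := fun J y hy =>
    differentiableAt_of_contDiffOn hU (contDiffOn_pderiv hU hg J) hy
  -- first derivative of Q*g on U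
  have step1 : ∀ J, ∀ y ∈ U, pderiv p q J (fun z => QForm p q z * g z) y
      = pderiv p q J (QForm p q) y * g y + QForm p q y * pderiv p q J g y :=
    fun J y hy => pderiv_mul (hQd y) (hgd y hy) J
  -- second derivatives at x
  have key : ∀ I J : Idx p q, pderiv p q I (pderiv p q J (fun z => QForm p q z * g z)) x
      = 2 * htMat p q J I * g x + pderiv p q J (QForm p q) x * pderiv p q I g x
        + pderiv p q I (QForm p q) x * pderiv p q J g x
        + QForm p q x * pderiv p q I (pderiv p q J g) x := by
    intro I J
    rw [pderiv_congr_open hU (step1 J) hx I]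
    have d1 : DifferentiableAt ℝ (fun z => pderiv p q J (QForm p q) z * g z) x :=
      ((differentiable_pderivQ J) x).mul (hgd x hx)
    have d2 : DifferentiableAt ℝ (fun z => QForm p q z * pderiv p q J g z) x :=
      (hQd x).mul (hdg J x hx)
    rw [pderiv_add d1 d2 I, pderiv_mul ((differentiable_pderivQ J) x) (hgd x hx) I,
      pderiv_mul (hQd x) (hdg J x hx) I, pderiv_pderiv_QForm J I x]
    ring
  have L : laplt p q (fun y => QForm p q y * g y) x
      = ∑ I : Idx p q, ∑ J : Idx p q,
          htMat p q I J * pderiv p q I (pderiv p q J fun z => QForm p q z * g z) x := by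
    unfold laplt; rw [htMat_inv]
  rw [L]
  rw [Finset.sum_congr rfl fun I _ => Finset.sum_congr rfl fun J _ => by rw [key I J]]
  have expand : ∀ I J : Idx p q, htMat p q I J *
      (2 * htMat p q J I * g x + pderiv p q J (QForm p q) x * pderiv p q I g x
        + pderiv p q I (QForm p q) x * pderiv p q J g x
        + QForm p q x * pderiv p q I (pderiv p q J g) x)
      = (htMat p q I J * htMat p q J I) * (2 * g x)
        + (htMat p q I J * pderiv p q J (QForm p q) x) * pderiv p q I g x
        + (htMat p q I J * pderiv p q I (QForm p q) x) * pderiv p q J g x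
        + QForm p q x * (htMat p q I J * pderiv p q I (pderiv p q J g) x) := by
    intro I J; ring
  rw [Finset.sum_congr rfl fun I _ => Finset.sum_congr rfl fun J _ => expand I J]
  simp only [Finset.sum_add_distrib]
  have S1 : ∑ I : Idx p q, ∑ J : Idx p q, (htMat p q I J * htMat p q J I) * (2 * g x)
      = 2 * (p + q + 2) * g x := by
    have : ∀ I : Idx p q, ∑ J, (htMat p q I J * htMat p q J I) * (2 * g x)
        = (2 * g x) := by
      intro I
      rw [← Finset.sum_mul, sum_htMat_mul]
      simp
    rw [Finset.sum_congr rfl fun I _ => this I, Finset.sum_const, card_Idx, nsmul_eq_mul]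
    push_cast; ring
  have S2 : ∑ I : Idx p q, ∑ J : Idx p q,
      (htMat p q I J * pderiv p q J (QForm p q) x) * pderiv p q I g x = 2 * euler p q g x := by
    have : ∀ I : Idx p q, ∑ J, (htMat p q I J * pderiv p q J (QForm p q) x) * pderiv p q I g x
        = 2 * x I * pderiv p q I g x := by
      intro I
      rw [← Finset.sum_mul, sum_htMat_pderivQ]
    rw [Finset.sum_congr rfl fun I _ => this I]
    unfold euler
    rw [Finset.mul_sum]
    exact Finset.sum_congr rfl fun I _ => by ring
  have S3 : ∑ I : Idx p q, ∑ J : Idx p q,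
      (htMat p q I J * pderiv p q I (QForm p q) x) * pderiv p q J g x = 2 * euler p q g x := by
    rw [Finset.sum_comm]
    have : ∀ J : Idx p q, ∑ I, (htMat p q I J * pderiv p q I (QForm p q) x) * pderiv p q J g x
        = 2 * x J * pderiv p q J g x := by
      intro J
      rw [← Finset.sum_mul]
      congr 1
      rw [Finset.sum_congr rfl fun I _ => by rw [htMat_symm I J]]
      exact sum_htMat_pderivQ x J
    rw [Finset.sum_congr rfl fun J _ => this J]
    unfold euler
    rw [Finset.mul_sum]
    exact Finset.sum_congr rfl fun J _ => by ring
  have S4 : ∑ I : Idx p q, ∑ J : Idx p q,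
      QForm p q x * (htMat p q I J * pderiv p q I (pderiv p q J g) x)
      = QForm p q x * laplt p q g x := by
    unfold laplt
    rw [htMat_inv, Finset.mul_sum]
    exact Finset.sum_congr rfl fun I _ => by rw [Finset.mul_sum]
  rw [S1, S2, S3, S4]
  ring

lemma euler_mul {f g : (Idx p q → ℝ) → ℝ} {x : Idx p q → ℝ}
    (hf : DifferentiableAt ℝ f x) (hg : DifferentiableAt ℝ g x) :
    euler p q (fun y => f y * g y) x = f x * euler p q g x + g x * euler p q f x := by
  unfold euler
  rw [Finset.sum_congr rfl fun I _ => by rw [pderiv_mul hf hg I]]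
  rw [Finset.mul_sum, Finset.mul_sum, ← Finset.sum_add_distrib]
  exact Finset.sum_congr rfl fun I _ => by ring

lemma euler_QForm (x : Idx p q → ℝ) : euler p q (QForm p q) x = 2 * QForm p q x := by
  unfold euler
  simp only [pderiv_QForm]
  have step : ∀ I, x I * (2 * ∑ J, htMat p q I J * x J)
      = 2 * ∑ J, htMat p q I J * x I * x J := by
    intro I
    rw [Finset.mul_sum, Finset.mul_sum, Finset.mul_sum]
    exact Finset.sum_congr rfl fun J _ => by ring
  rw [Finset.sum_congr rfl fun I _ => step I, ← Finset.mul_sum]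
  rfl

section main
variable {U : Set (Idx p q → ℝ)} {l : (Idx p q → ℝ) → ℝ} {m : ℕ}

lemma contDiffOn_F (hl : ContDiffOn ℝ (⊤ : ℕ∞) l U) (j : ℕ) :
    ContDiffOn ℝ (⊤ : ℕ∞) (fun y => QForm p q y ^ j * l y) U :=
  ((contDiff_QForm.pow j).contDiffOn).mul hl

lemma euler_F (hU : IsOpen U) (hl : ContDiffOn ℝ (⊤ : ℕ∞) l U) {d : ℝ}
    (hhom : ∀ x ∈ U, euler p q l x = d * l x) (j : ℕ) :
    ∀ x ∈ U, euler p q (fun y => QForm p q y ^ j * l y) x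
      = (2 * j + d) * (QForm p q x ^ j * l x) := by
  induction j with
  | zero =>
    intro x hx
    have e : (fun y => QForm p q y ^ 0 * l y) = l := by funext y; simp
    rw [e, hhom x hx]
    simp
  | succ j ih =>
    intro x hx
    have e : (fun y => QForm p q y ^ (j+1) * l y)
        = fun y => QForm p q y * (QForm p q y ^ j * l y) := by
      funext y; ring
    rw [e, euler_mul ((contDiff_QForm.differentiable (by simp)) x)
      (differentiableAt_of_contDiffOn hU (contDiffOn_F hl j) hx), ih x hx, euler_QForm]
    push_cast
    ring

lemma laplt_F (hU : IsOpen U) (hl : ContDiffOn ℝ (⊤ : ℕ∞) l U)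
    (hhom : ∀ x ∈ U, euler p q l x = (-(p + q : ℝ) / 2 - (m : ℝ)) * l x)
    (hharm : ∀ x ∈ U, laplt p q l x = 0) (j : ℕ) :
    ∀ x ∈ U, laplt p q (fun y => QForm p q y ^ (j+1) * l y) x
      = (4 * ((j:ℝ)+1) * (((j:ℝ)+1) - m)) * (QForm p q x ^ j * l x) := by
  induction j with
  | zero =>
    intro x hx
    have e : (fun y => QForm p q y ^ 1 * l y) = fun y => QForm p q y * l y := by
      funext y; ring
    rw [e, laplt_QForm_mul hU hl hx, hharm x hx, hhom x hx]
    push_cast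
    ring
  | succ j ih =>
    intro x hx
    have e : (fun y => QForm p q y ^ (j+2) * l y)
        = fun y => QForm p q y * (QForm p q y ^ (j+1) * l y) := by
      funext y; ring
    rw [e, laplt_QForm_mul hU (contDiffOn_F hl (j+1)) hx, ih x hx,
      euler_F hU hl hhom (j+1) x hx]
    push_cast
    ring

end main

def nuC (m k : ℕ) : ℝ :=
  ∏ i ∈ Finset.range k, (4 * ((m-1-i : ℕ) : ℝ) * (((m-1-i : ℕ) : ℝ) - (m:ℝ)))

section main2
variable {U : Set (Idx p q → ℝ)} {l : (Idx p q → ℝ) → ℝ} {m : ℕ}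

lemma iter_F (hU : IsOpen U) (hl : ContDiffOn ℝ (⊤ : ℕ∞) l U)
    (hhom : ∀ x ∈ U, euler p q l x = (-(p + q : ℝ) / 2 - (m : ℝ)) * l x)
    (hharm : ∀ x ∈ U, laplt p q l x = 0) :
    ∀ k, k ≤ m - 1 → ∀ x ∈ U,
      (laplt p q)^[k] (fun y => QForm p q y ^ (m-1) * l y) x
        = nuC m k * (QForm p q x ^ (m-1-k) * l x) := by
  intro k
  induction k with
  | zero =>
    intro _ x hx
    simp [nuC]
  | succ k ih =>
    intro hk x hx
    rw [Function.iterate_succ_apply']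
    have hk' : k ≤ m - 1 := Nat.le_of_succ_le hk
    have congr1 : laplt p q ((laplt p q)^[k] (fun y => QForm p q y ^ (m-1) * l y)) x
        = laplt p q (fun y => nuC m k * (QForm p q y ^ (m-1-k) * l y)) x :=
      laplt_congr_open hU (fun y hy => ih hk' y hy) hx
    rw [congr1, laplt_const_mul]
    have hsplit : m - 1 - k = (m - 2 - k) + 1 := by omega
    rw [hsplit, laplt_F hU hl hhom hharm (m-2-k) x hx]
    have hcast : ((m - 2 - k : ℕ) : ℝ) + 1 = ((m - 1 - k : ℕ) : ℝ) := by
      have : (m - 1 - k : ℕ) = (m - 2 - k) + 1 := by omega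
      rw [this]; push_cast; ring
    have hidx : m - 1 - (k + 1) = m - 2 - k := by omega
    rw [hidx]
    unfold nuC
    rw [Finset.prod_range_succ]
    rw [hcast]
    ring

lemma nuC_fact (m : ℕ) (hm : 1 ≤ m) :
    ∀ k, k ≤ m - 1 →
      nuC m k * ((m - 1 - k).factorial : ℝ)
        = (-4:ℝ)^k * (k.factorial : ℝ) * ((m-1).factorial : ℝ) := by
  intro k
  induction k with
  | zero => simp [nuC]
  | succ k ih =>
    intro hk
    have hk' : k ≤ m - 1 := Nat.le_of_succ_le hk
    have h1 : (m - 1 - k : ℕ) = (m - 2 - k) + 1 := by omega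
    have h2 : m - 1 - (k + 1) = m - 2 - k := by omega
    have hterm : ((m - 1 - k : ℕ) : ℝ) - (m : ℝ) = -((k:ℝ)+1) := by
      have h3 : (m - 1 - k : ℕ) + (k + 1) = m := by omega
      have := congrArg (fun t : ℕ => (t : ℝ)) h3
      push_cast at this
      linarith
    unfold nuC
    rw [Finset.prod_range_succ, h2]
    have hfac : ((m - 1 - k).factorial : ℝ) = ((m-1-k : ℕ) : ℝ) * ((m - 2 - k).factorial : ℝ) := by
      rw [h1, Nat.factorial_succ]
      push_cast
      ring
    have ihv := ih hk'
    unfold nuC at ihv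
    rw [hfac] at ihv
    have hfk : ((k+1).factorial : ℝ) = ((k:ℝ)+1) * (k.factorial : ℝ) := by
      rw [Nat.factorial_succ]; push_cast; ring
    rw [hterm, hfk, pow_succ]
    nlinarith [ihv]

end main2

/-- If `l` is harmonic and homogeneous of degree `-n/2 - m`, then
`c_m Δ̃^{m-1}(Q^{m-1} l) = l`, where `c_m⁻¹ = (-4)^{m-1}((m-1)!)²`. -/
theorem statement11 (p q : ℕ) (hn : 3 ≤ p + q)
    (m : ℕ) (hm : 1 ≤ m)
    (U : Set (Idx p q → ℝ)) (hU : IsOpen U)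
    (l : (Idx p q → ℝ) → ℝ) (hl : ContDiffOn ℝ (⊤ : ℕ∞) l U)
    (hhom : ∀ x ∈ U, euler p q l x = (-(p + q : ℝ) / 2 - (m : ℝ)) * l x)
    (hharm : ∀ x ∈ U, laplt p q l x = 0) :
    ∀ x ∈ U,
      cConst m *
        ((laplt p q)^[m - 1] (fun y => QForm p q y ^ (m - 1) * l y)) x = l x := by
  intro x hx
  have hfin := iter_F hU hl hhom hharm (m-1) le_rfl x hx
  have h0 : m - 1 - (m-1) = 0 := by omega
  rw [h0] at hfin
  simp only [pow_zero, one_mul] at hfin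
  rw [hfin, ← mul_assoc]
  have hnu := nuC_fact m hm (m-1) le_rfl
  rw [h0] at hnu
  simp only [Nat.factorial_zero, Nat.cast_one, mul_one] at hnu
  have hkey : cConst m * nuC m (m-1) = 1 := by
    rw [hnu, cConst]
    rw [show (-4:ℝ)^(m-1) * ((m-1).factorial:ℝ) * ((m-1).factorial:ℝ)
        = (-4:ℝ)^(m-1) * ((m-1).factorial:ℝ)^2 by ring]
    refine inv_mul_cancel₀ (mul_ne_zero (pow_ne_zero _ (by norm_num)) (pow_ne_zero _ ?_))
    exact_mod_cast (Nat.factorial_ne_zero (m-1))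
  rw [hkey, one_mul]
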